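/- Let N = n·m where n and m are odd natural numbers that are coprime and both different from 1. Then there exists an integer k with 1 ≤ k ≤ N−1 such that k is coprime to N and the (k mod N)-monomial minimal solution of (E_N) is reducible of size 2·n·m. -/

import Mathlib

open Matrix

/-- The elementary matrix `[[a, -1], [1, 0]]` over `ZMod N`. -/
def genMat {N : ℕ} (a : ZMod N) : Matrix (Fin 2) (Fin 2) (ZMod N) :=
  !![a, -1; 1, 0]

/-- `Mword [a₁, …, aₙ]` is the matrix `Mₙ(a₁, …, aₙ) = genMat aₙ * ⋯ * genMat a₁`. -/
def Mword {N : ℕ} (l : List (ZMod N)) : Matrix (Fin 2) (Fin 2) (ZMod N) :=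
  (l.reverse.map genMat).prod

/-- A tuple (encoded as a list) is a solution of `(E_N)` if its matrix is `±Id`. -/
def IsSolutionE {N : ℕ} (l : List (ZMod N)) : Prop :=
  Mword l = 1 ∨ Mword l = -1

/-- The size of the `k`-monomial minimal solution of `(E_N)`: the least positive `n`
such that the constant `n`-tuple `(k, …, k)` is a solution of `(E_N)`. -/
noncomputable def monomialSize (N : ℕ) (k : ZMod N) : ℕ :=
  sInf {n : ℕ | 0 < n ∧ IsSolutionE (List.replicate n k)}

/-- The `k`-monomial minimal solution of `(E_N)`. -/
noncomputable def monoSol (N : ℕ) (k : ZMod N) : List (ZMod N) :=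
  List.replicate (monomialSize N k) k

/-- The sum `⊕` of two tuples:
`(a₁,…,aₘ) ⊕ (b₁,…,bₗ) = (a₁+bₗ, a₂, …, aₘ₋₁, aₘ+b₁, b₂, …, bₗ₋₁)`. -/
def oplus {N : ℕ} (a b : List (ZMod N)) : List (ZMod N) :=
  (a.headD 0 + b.getLastD 0) ::
    ((a.drop 1).dropLast ++ (a.getLastD 0 + b.headD 0) :: (b.drop 1).dropLast)

/-- Two tuples are equivalent (`∼`) if one is obtained from the other by a cyclic
permutation, possibly composed with order reversal. -/
def TupEquiv {N : ℕ} (c d : List (ZMod N)) : Prop :=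
  (∃ i, d = c.rotate i) ∨ (∃ i, d = c.reverse.rotate i)

/-- A tuple is reducible if it is equivalent to a sum `a ⊕ b` where `b` is a solution of
`(E_N)` and both `a`, `b` have length at least `3`. -/
def IsReducibleE {N : ℕ} (c : List (ZMod N)) : Prop :=
  ∃ a b : List (ZMod N), 3 ≤ a.length ∧ 3 ≤ b.length ∧ IsSolutionE b ∧
    TupEquiv c (oplus a b)

/-- An irreducible solution of `(E_N)`: a solution of size at least `3` that is not
reducible (the solution `(0,0)` is not considered irreducible). -/
def IsIrreducibleE {N : ℕ} (c : List (ZMod N)) : Prop :=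
  IsSolutionE c ∧ 3 ≤ c.length ∧ ¬ IsReducibleE c

/-- A reducible solution of `(E_N)`: a solution that is not irreducible. -/
def IsReducibleSol {N : ℕ} (c : List (ZMod N)) : Prop :=
  IsSolutionE c ∧ ¬ IsIrreducibleE c

/-- `N` is monomially irreducible if for every nonzero `k ∈ ZMod N` the `k`-monomial
minimal solution of `(E_N)` is irreducible. -/
def MonomiallyIrreducible (N : ℕ) : Prop :=
  ∀ k : ZMod N, k ≠ 0 → IsIrreducibleE (monoSol N k)

/-- `N` is quasi monomially irreducible if for every integer `k` coprime to `N` the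
`(k mod N)`-monomial minimal solution of `(E_N)` is irreducible. -/
def QuasiMonomiallyIrreducible (N : ℕ) : Prop :=
  ∀ k : ℤ, Int.gcd k (N : ℤ) = 1 → IsIrreducibleE (monoSol N (k : ZMod N))

/-- `N` is semi monomially irreducible: if `N` is even but not divisible by `4`, this
requires that for every integer `a` coprime to `N/2` the `(2a mod N)`-monomial minimal
solution of `(E_N)` is irreducible; otherwise (i.e. `N` odd or divisible by `4`), it
requires the same for every integer `a` coprime to `N`. -/
def SemiMonomiallyIrreducible (N : ℕ) : Prop :=
  if 2 ∣ N ∧ ¬ (4 ∣ N) then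
    ∀ a : ℤ, Int.gcd a ((N / 2 : ℕ) : ℤ) = 1 →
      IsIrreducibleE (monoSol N ((2 * a : ℤ) : ZMod N))
  else
    ∀ a : ℤ, Int.gcd a (N : ℤ) = 1 →
      IsIrreducibleE (monoSol N ((2 * a : ℤ) : ZMod N))

/-! Take `k ≡ 2 (mod n)` and `k ≡ -2 (mod m)`. Modulo `n` the matrix `M(2)` is unipotent,
`M(2)ʲ = [[1 + j, -j], [j, 1 - j]]`, and modulo `m`, `M(-2)ʲ = (-1)ʲ [[1 + j, j], [-j, 1 - j]]`;
so the constant tuple `(k, …, k)` of length `ℓ` is a solution exactly when `2nm ∣ ℓ`.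
For reducibility, pick `j` odd with `n ∣ j` and `m ∣ j + 2`, and let `d` be the residue of `j`.
The constant tuple of length `2nm` is `a ⊕ b` with `a = (k - d, k, …, k, k - d)` and
`b = (d, k, …, k, d)` of length `j + 2`, and `b` is a solution: modulo `n`,
`M(b) = M(0) M(2)ʲ M(0) = M(0)² = -Id`, and modulo `m`, `M(b) = M(-2)ʲ⁺² = -Id`. -/

open List

lemma Mword_replicate {N : ℕ} (ℓ : ℕ) (a : ZMod N) :
    Mword (replicate ℓ a) = genMat a ^ ℓ := by
  simp [Mword, List.prod_replicate]

lemma Mword_cons_replicate_concat {N : ℕ} (d c : ZMod N) (j : ℕ) :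
    Mword (d :: (replicate j c ++ [d])) = genMat d * genMat c ^ j * genMat d := by
  simp [Mword, List.prod_replicate, mul_assoc]

lemma genMat_map {N q : ℕ} (f : ZMod N →+* ZMod q) (a : ZMod N) :
    f.mapMatrix (genMat a) = genMat (f a) := by
  ext i j
  fin_cases i <;> fin_cases j <;> simp [genMat]

lemma genMat_zero_mul_self {N : ℕ} : genMat (0 : ZMod N) * genMat 0 = -1 := by
  ext i j
  fin_cases i <;> fin_cases j <;> simp [genMat]

section Powers

variable {q : ℕ}

lemma genMat_two_pow (j : ℕ) :
    genMat (2 : ZMod q) ^ j = !![1 + (j : ZMod q), -j; j, 1 - j] := by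
  induction j with
  | zero => simp [Matrix.one_fin_two]
  | succ j ih =>
    rw [pow_succ, ih, genMat]
    ext i j
    fin_cases i <;> fin_cases j <;> simp <;> ring

lemma genMat_neg_two_pow (j : ℕ) :
    genMat (-2 : ZMod q) ^ j = (-1) ^ j • !![1 + (j : ZMod q), j; -j, 1 - j] := by
  induction j with
  | zero => simp [Matrix.one_fin_two]
  | succ j ih =>
    rw [pow_succ, ih, genMat, Matrix.smul_mul, pow_succ, mul_smul]
    ext i j
    fin_cases i <;> fin_cases j <;> simp <;> ring

lemma genMat_two_pow_eq_one_iff (j : ℕ) : genMat (2 : ZMod q) ^ j = 1 ↔ (j : ZMod q) = 0 := by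
  simp [genMat_two_pow, Matrix.one_fin_two]

lemma genMat_two_pow_ne_neg_one (h2 : (2 : ZMod q) ≠ 0) (j : ℕ) : genMat (2 : ZMod q) ^ j ≠ -1 := by
  intro h
  have h10 : (j : ZMod q) = 0 := by simpa [genMat_two_pow] using congrFun₂ h 1 0
  have h00 : 1 + (j : ZMod q) = -1 := by simpa [genMat_two_pow] using congrFun₂ h 0 0
  exact h2 (by linear_combination h00 - h10)

lemma genMat_neg_two_pow_eq_one_iff (h2 : (2 : ZMod q) ≠ 0) (j : ℕ) :
    genMat (-2 : ZMod q) ^ j = 1 ↔ Even j ∧ (j : ZMod q) = 0 := by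
  rcases j.even_or_odd with hj | hj
  · simp [genMat_neg_two_pow, hj.neg_one_pow, hj, Matrix.one_fin_two]
  · refine iff_of_false (fun h => h2 ?_) (fun h => Nat.not_even_iff_odd.2 hj h.1)
    have h10 : (j : ZMod q) = 0 := by
      simpa [genMat_neg_two_pow, hj.neg_one_pow] using congrFun₂ h 1 0
    have h00 : -1 + -(j : ZMod q) = 1 := by
      simpa [genMat_neg_two_pow, hj.neg_one_pow] using congrFun₂ h 0 0
    linear_combination -h00 - h10

lemma genMat_neg_two_pow_eq_neg_one_iff (h2 : (2 : ZMod q) ≠ 0) (j : ℕ) :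
    genMat (-2 : ZMod q) ^ j = -1 ↔ Odd j ∧ (j : ZMod q) = 0 := by
  rcases j.even_or_odd with hj | hj
  · refine iff_of_false (fun h => h2 ?_) (fun h => Nat.not_odd_iff_even.2 hj h.1)
    have h10 : (j : ZMod q) = 0 := by
      simpa [genMat_neg_two_pow, hj.neg_one_pow] using congrFun₂ h 1 0
    have h00 : 1 + (j : ZMod q) = -1 := by
      simpa [genMat_neg_two_pow, hj.neg_one_pow] using congrFun₂ h 0 0
    linear_combination h00 - h10
  · simp [genMat_neg_two_pow, hj.neg_one_pow, hj, Matrix.one_fin_two]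

end Powers

lemma oplus_replicate {N : ℕ} (c d : ZMod N) (p j : ℕ) :
    oplus ((c - d) :: (replicate p c ++ [c - d])) (d :: (replicate j c ++ [d]))
      = replicate (p + j + 2) c := by
  rw [oplus, ← cons_append (a := c - d), ← cons_append (a := d), getLastD_concat,
    getLastD_concat]
  simp only [headD_cons, cons_append, drop_succ_cons, drop_zero, dropLast_concat, sub_add_cancel]
  rw [← replicate_succ, ← replicate_add, ← replicate_succ]
  rfl

lemma isReducibleE_replicate {N : ℕ} {c d : ZMod N} {p j : ℕ} (hp : 1 ≤ p) (hj : 1 ≤ j)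
    (hb : IsSolutionE (d :: (replicate j c ++ [d]))) : IsReducibleE (replicate (p + j + 2) c) :=
  ⟨(c - d) :: (replicate p c ++ [c - d]), _, by simpa, by simpa, hb,
    Or.inl ⟨0, by rw [rotate_zero, oplus_replicate]⟩⟩

lemma IsReducibleE.isReducibleSol {N : ℕ} {c : List (ZMod N)} (hred : IsReducibleE c)
    (hsol : IsSolutionE c) : IsReducibleSol c :=
  ⟨hsol, fun h => h.2.2 hred⟩

lemma monomialSize_eq_of_isSolutionE_iff {N L : ℕ} {c : ZMod N} (hL : 0 < L)
    (h : ∀ ℓ, IsSolutionE (replicate ℓ c) ↔ L ∣ ℓ) : monomialSize N c = L := by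
  refine le_antisymm (Nat.sInf_le ⟨hL, (h L).2 dvd_rfl⟩) (le_csInf ⟨L, hL, (h L).2 dvd_rfl⟩ ?_)
  rintro ℓ ⟨hℓ, hsol⟩
  exact Nat.le_of_dvd hℓ ((h ℓ).1 hsol)

lemma matrix_eq_of_castHom_mapMatrix_eq {n m : ℕ} (hcop : n.Coprime m)
    {A B : Matrix (Fin 2) (Fin 2) (ZMod (n * m))}
    (hn : (ZMod.castHom (dvd_mul_right n m) (ZMod n)).mapMatrix A
      = (ZMod.castHom (dvd_mul_right n m) (ZMod n)).mapMatrix B)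
    (hm : (ZMod.castHom (dvd_mul_left m n) (ZMod m)).mapMatrix A
      = (ZMod.castHom (dvd_mul_left m n) (ZMod m)).mapMatrix B) : A = B := by
  ext i j
  apply (ZMod.chineseRemainder hcop).injective
  ext
  · simpa [ZMod.chineseRemainder] using congrFun (congrFun hn i) j
  · simpa [ZMod.chineseRemainder] using congrFun (congrFun hm i) j

lemma ZMod.two_ne_zero_of_odd {n : ℕ} (hn : Odd n) (hn1 : n ≠ 1) : (2 : ZMod n) ≠ 0 := by
  intro h
  have h2 : n ∣ 2 := (ZMod.natCast_eq_zero_iff 2 n).1 (by exact_mod_cast h)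
  rcases (Nat.dvd_prime Nat.prime_two).1 h2 with rfl | rfl
  exacts [hn1 rfl, absurd hn (by decide)]

lemma exists_odd_dvd_dvd_add_two {n m : ℕ} (hcop : n.Coprime m) (hn : Odd n) (hm : Odd m)
    (hn1 : n ≠ 1) (hm1 : m ≠ 1) : ∃ j, Odd j ∧ n ∣ j ∧ m ∣ j + 2 ∧ j + 3 ≤ 2 * n * m := by
  have hcop' : (2 * n).Coprime m := (Nat.coprime_two_left.2 hm).mul_left hcop
  obtain ⟨j, hjlt, hjn, hjm⟩ : ∃ j < 2 * n * m, j ≡ n [MOD 2 * n] ∧ j ≡ m - 2 [MOD m] :=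
    ⟨_, Nat.chineseRemainder_lt_mul hcop' n (m - 2) (by grind) (by grind),
      (Nat.chineseRemainder hcop' n (m - 2)).2⟩
  have hnj : n ∣ j := (hjn.dvd_iff (dvd_mul_left n 2)).2 dvd_rfl
  have hj : Odd j := by
    rw [← Nat.not_even_iff_odd, even_iff_two_dvd, hjn.dvd_iff (dvd_mul_right 2 n),
      ← even_iff_two_dvd, Nat.not_even_iff_odd]
    exact hn
  have hmj : m ∣ j + 2 := by
    have := hjm.add_right 2
    rw [Nat.sub_add_cancel (by grind)] at this
    exact (this.dvd_iff dvd_rfl).2 dvd_rfl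
  refine ⟨j, hj, hnj, hmj, ?_⟩
  -- `j` is odd and `2nm` even, so otherwise `j = 2nm - 1`, which `n ∣ j` rules out
  by_contra! hlarge
  have hj' : 2 * n * m - j = 1 := by grind
  have : n ∣ 2 * n * m - j := Nat.dvd_sub (Dvd.intro_left _ rfl |>.mul_right m) hnj
  exact hn1 (Nat.dvd_one.1 (hj' ▸ this))

section Residues

variable {n m : ℕ}

local notation "πₙ" => ZMod.castHom (dvd_mul_right n m) (ZMod n)
local notation "πₘ" => ZMod.castHom (dvd_mul_left m n) (ZMod m)

lemma exists_isUnit_castHom_eq (hcop : n.Coprime m) (hn : Odd n) (hm : Odd m) :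
    ∃ κ : ZMod (n * m), IsUnit κ ∧ πₙ κ = 2 ∧ πₘ κ = -2 := by
  set e := ZMod.chineseRemainder hcop
  have he : ∀ x, e x = (πₙ x, πₘ x) := fun x => by ext <;> simp [e, ZMod.chineseRemainder]
  have hunit : IsUnit ((2, -2) : ZMod n × ZMod m) := by
    have h2n := (ZMod.isUnit_iff_coprime 2 n).2 (Nat.coprime_two_left.2 hn)
    have h2m := (ZMod.isUnit_iff_coprime 2 m).2 (Nat.coprime_two_left.2 hm)
    exact Prod.isUnit_iff.2 ⟨by exact_mod_cast h2n, by exact_mod_cast h2m.neg⟩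
  refine ⟨e.symm (2, -2), hunit.map e.symm, ?_⟩
  simpa [he] using e.apply_symm_apply (2, -2)

lemma isSolutionE_replicate_iff (hcop : n.Coprime m) (hn : Odd n) (hm : Odd m) (hn1 : n ≠ 1)
    (hm1 : m ≠ 1) {κ : ZMod (n * m)} (hκn : πₙ κ = 2) (hκm : πₘ κ = -2) (ℓ : ℕ) :
    IsSolutionE (replicate ℓ κ) ↔ 2 * n * m ∣ ℓ := by
  rw [IsSolutionE, Mword_replicate]
  constructor
  · rintro (h | h)
    · have hn' := congrArg (πₙ).mapMatrix h
      have hm' := congrArg (πₘ).mapMatrix h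
      simp only [map_pow, genMat_map, map_one, hκn, hκm] at hn' hm'
      rw [genMat_two_pow_eq_one_iff, ZMod.natCast_eq_zero_iff] at hn'
      rw [genMat_neg_two_pow_eq_one_iff (ZMod.two_ne_zero_of_odd hm hm1),
        ZMod.natCast_eq_zero_iff, even_iff_two_dvd] at hm'
      exact ((Nat.coprime_two_left.2 hm).mul_left hcop).mul_dvd_of_dvd_of_dvd
        ((Nat.coprime_two_left.2 hn).mul_dvd_of_dvd_of_dvd hm'.1 hn') hm'.2
    · have hn' := congrArg (πₙ).mapMatrix h
      simp only [map_pow, genMat_map, map_neg, map_one, hκn] at hn'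
      exact absurd hn' (genMat_two_pow_ne_neg_one (ZMod.two_ne_zero_of_odd hn hn1) ℓ)
  · rintro ⟨t, rfl⟩
    left
    apply matrix_eq_of_castHom_mapMatrix_eq hcop
    · rw [map_pow, genMat_map, map_one, hκn, genMat_two_pow_eq_one_iff]
      simp
    · rw [map_pow, genMat_map, map_one, hκm,
        genMat_neg_two_pow_eq_one_iff (ZMod.two_ne_zero_of_odd hm hm1)]
      simp [mul_assoc]

lemma isSolutionE_cons_replicate_concat (hcop : n.Coprime m) (hm : Odd m) (hm1 : m ≠ 1)
    {κ : ZMod (n * m)} (hκn : πₙ κ = 2) (hκm : πₘ κ = -2) {j : ℕ} (hj : Odd j) (hnj : n ∣ j)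
    (hmj : m ∣ j + 2) : IsSolutionE ((j : ZMod (n * m)) :: (replicate j κ ++ [(j : ZMod _)])) := by
  right
  rw [Mword_cons_replicate_concat]
  apply matrix_eq_of_castHom_mapMatrix_eq hcop
  · have hj0 : (j : ZMod n) = 0 := (ZMod.natCast_eq_zero_iff j n).2 hnj
    simp only [map_mul, map_pow, genMat_map, map_natCast, map_neg, map_one, hκn, hj0,
      (genMat_two_pow_eq_one_iff j).2 hj0, mul_one, genMat_zero_mul_self]
  · have hj2 : (j : ZMod m) = -2 :=
      eq_neg_of_add_eq_zero_left (by exact_mod_cast (ZMod.natCast_eq_zero_iff _ m).2 hmj)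
    simp only [map_mul, map_pow, genMat_map, map_natCast, map_neg, map_one, hκm, hj2]
    rw [← pow_succ', ← pow_succ, genMat_neg_two_pow_eq_neg_one_iff (ZMod.two_ne_zero_of_odd hm hm1)]
    exact ⟨hj.add_even even_two, by exact_mod_cast (ZMod.natCast_eq_zero_iff _ m).2 hmj⟩

lemma isReducibleSol_replicate (hcop : n.Coprime m) (hn : Odd n) (hm : Odd m) (hn1 : n ≠ 1)
    (hm1 : m ≠ 1) {κ : ZMod (n * m)} (hκn : πₙ κ = 2) (hκm : πₘ κ = -2) :
    IsReducibleSol (replicate (2 * n * m) κ) := by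
  obtain ⟨j, hj, hnj, hmj, hjle⟩ := exists_odd_dvd_dvd_add_two hcop hn hm hn1 hm1
  have hred := isReducibleE_replicate (p := 2 * n * m - j - 2) (by omega) hj.pos
    (isSolutionE_cons_replicate_concat hcop hm hm1 hκn hκm hj hnj hmj)
  rw [show 2 * n * m - j - 2 + j + 2 = 2 * n * m by omega] at hred
  exact hred.isReducibleSol ((isSolutionE_replicate_iff hcop hn hm hn1 hm1 hκn hκm _).2 dvd_rfl)

end Residues

/-- if `N = n·m` with `n, m` odd, coprime and both `≠ 1`, there is
`1 ≤ k ≤ N - 1` coprime to `N` such that the `(k mod N)`-monomial minimal solution of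
`(E_N)` is reducible of size `2·n·m`. -/
theorem stmt_17 (n m : ℕ) (hn : n ≠ 1) (hm : m ≠ 1) (hnodd : Odd n) (hmodd : Odd m)
    (hcop : Nat.Coprime n m) :
    ∃ k : ℕ, 1 ≤ k ∧ k ≤ n * m - 1 ∧ Nat.Coprime k (n * m) ∧
      IsReducibleSol (monoSol (n * m) (k : ZMod (n * m))) ∧
      monomialSize (n * m) (k : ZMod (n * m)) = 2 * n * m := by
  have : NeZero (n * m) := ⟨mul_ne_zero hnodd.pos.ne' hmodd.pos.ne'⟩
  obtain ⟨κ, hunit, hκn, hκm⟩ := exists_isUnit_castHom_eq hcop hnodd hmodd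
  have hsize : monomialSize (n * m) κ = 2 * n * m :=
    monomialSize_eq_of_isSolutionE_iff (by have := hnodd.pos; have := hmodd.pos; positivity)
      (isSolutionE_replicate_iff hcop hnodd hmodd hn hm hκn hκm)
  have hκ0 : κ ≠ 0 := fun h => ZMod.two_ne_zero_of_odd hnodd hn (by simpa [h] using hκn.symm)
  refine ⟨κ.val, Nat.one_le_iff_ne_zero.2 ((ZMod.val_ne_zero κ).2 hκ0), ?_, ?_, ?_⟩
  · have := κ.val_lt
    omega
  · exact (ZMod.isUnit_iff_coprime _ _).1 (by rwa [ZMod.natCast_zmod_val])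
  · rw [ZMod.natCast_zmod_val, monoSol, hsize]
    exact ⟨isReducibleSol_replicate hcop hnodd hmodd hn hm hκn hκm, rfl⟩
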